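/- arXiv:1703.08473 — 5 statements merged into one kernel-verified Lean document; each statement's English description precedes it below -/
import Mathlib

section
/- Let D be a finite admissible set of primes contained in [1, M] for a function a : ℕ → ℤ satisfying |a(p)| ≤ 2 p^((2k-1)/2) for all primes p. Then binomial(|D|, k) ≤ 4k·M^((2k-1)/2) + 1; consequently |D| ≪_k M^((2k-1)/(2k)). -/
/-! Admissibility says precisely that `S ↦ ∑_{p ∈ S} a(p)` is injective on the `k`-subsets of `D`.
With `e = (2k-1)/2`, the Deligne bound puts each such sum in `[-2kM^e, 2kM^e]`, an interval
containing at most `4kM^e + 1` integers, whence `C(|D|, k) ≤ 4kM^e + 1`. As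
`C(n, k) ≥ (n + 1 - k)^k / k!`, taking `k`-th roots gives `|D| ≪_k M^(e/k)`. -/

/-- Admissibility: no two distinct strictly increasing `k`-tuples from `D` have equal
sums of `a`-values. -/
def Admissible (k : ℕ) (a : ℕ → ℤ) (D : Finset ℕ) : Prop :=
  ∀ q : ℕ → ℕ,
    (∀ i ∈ Finset.Icc 1 (2 * k), q i ∈ D) →
    (∀ i j, 1 ≤ i → i < j → j ≤ k → q i < q j) →
    (∀ i j, k + 1 ≤ i → i < j → j ≤ 2 * k → q i < q j) →
    (∃ i ∈ Finset.Icc 1 k, q i ≠ q (k + i)) →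
    ∑ i ∈ Finset.Icc 1 k, a (q i) ≠ ∑ i ∈ Finset.Icc (k + 1) (2 * k), a (q i)

open Finset

namespace Finset

variable (S : Finset ℕ)

theorem nth_mem {j : ℕ} (hj : j < #S) : Nat.nth (· ∈ S) j ∈ S :=
  Nat.nth_mem_of_lt_card S.finite_toSet (by rwa [finite_toSet_toFinset])

theorem nth_strictMonoOn : StrictMonoOn (Nat.nth (· ∈ S)) (Set.Iio #S) := by
  simpa using Nat.nth_strictMonoOn S.finite_toSet

theorem image_nth_range : (range #S).image (Nat.nth (· ∈ S)) = S := by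
  have h := Nat.image_nth_Iio_card S.finite_toSet
  rw [finite_toSet_toFinset] at h
  exact coe_injective (by push_cast; exact h)

theorem sum_range_nth {M : Type*} [AddCommMonoid M] (f : ℕ → M) :
    ∑ j ∈ range #S, f (Nat.nth (· ∈ S) j) = ∑ p ∈ S, f p := by
  conv_rhs => rw [← S.image_nth_range]
  exact (sum_image fun i hi j hj h =>
    S.nth_strictMonoOn.injOn (by simpa using hi) (by simpa using hj) h).symm

end Finset

/-- The 1-indexed `2k`-tuple `(s₁, …, s_k, t₁, …, t_k)` listing `S` and then `T` in increasing
order. -/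
noncomputable def concatSorted (k : ℕ) (S T : Finset ℕ) (i : ℕ) : ℕ :=
  if i ≤ k then Nat.nth (· ∈ S) (i - 1) else Nat.nth (· ∈ T) (i - (k + 1))

section concatSorted

variable {k : ℕ} {S T : Finset ℕ}

theorem concatSorted_of_le {i : ℕ} (hi : i ≤ k) :
    concatSorted k S T i = Nat.nth (· ∈ S) (i - 1) :=
  if_pos hi

theorem concatSorted_of_lt {i : ℕ} (hi : k < i) :
    concatSorted k S T i = Nat.nth (· ∈ T) (i - (k + 1)) :=
  if_neg hi.not_ge

theorem sum_concatSorted_left (hS : #S = k) (a : ℕ → ℤ) :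
    ∑ i ∈ Icc 1 k, a (concatSorted k S T i) = ∑ p ∈ S, a p := by
  rw [← Ico_add_one_right_eq_Icc, sum_Ico_eq_sum_range, Nat.add_sub_cancel, ← S.sum_range_nth, hS]
  refine sum_congr rfl fun j hj => ?_
  rw [concatSorted_of_le (by rw [mem_range] at hj; omega), Nat.add_sub_cancel_left]

theorem sum_concatSorted_right (hT : #T = k) (a : ℕ → ℤ) :
    ∑ i ∈ Icc (k + 1) (2 * k), a (concatSorted k S T i) = ∑ p ∈ T, a p := by
  rw [← Ico_add_one_right_eq_Icc, sum_Ico_eq_sum_range, ← T.sum_range_nth, hT,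
    show 2 * k + 1 - (k + 1) = k by omega]
  refine sum_congr rfl fun j _ => ?_
  rw [concatSorted_of_lt (by omega), Nat.add_sub_cancel_left]

end concatSorted

theorem Admissible.injOn_sum {k : ℕ} {a : ℕ → ℤ} {D : Finset ℕ} (hadm : Admissible k a D) :
    Set.InjOn (fun S => ∑ p ∈ S, a p) (D.powersetCard k) := by
  intro S hS T hT hsum
  obtain ⟨hSD, hS⟩ := mem_powersetCard.1 hS
  obtain ⟨hTD, hT⟩ := mem_powersetCard.1 hT
  by_contra hST
  refine hadm (concatSorted k S T) ?_ ?_ ?_ ?_ ?_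
  · intro i hi
    rw [mem_Icc] at hi
    rcases le_or_gt i k with hik | hki
    · rw [concatSorted_of_le hik]
      exact hSD (S.nth_mem (by omega))
    · rw [concatSorted_of_lt hki]
      exact hTD (T.nth_mem (by omega))
  · intro i j hi hij hj
    rw [concatSorted_of_le (by omega), concatSorted_of_le hj]
    exact S.nth_strictMonoOn (by rw [Set.mem_Iio]; omega) (by rw [Set.mem_Iio]; omega) (by omega)
  · intro i j hi hij hj
    rw [concatSorted_of_lt (by omega), concatSorted_of_lt (by omega)]
    exact T.nth_strictMonoOn (by rw [Set.mem_Iio]; omega) (by rw [Set.mem_Iio]; omega) (by omega)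
  · by_contra! hsame
    refine hST (S.image_nth_range.symm.trans ?_)
    rw [hS, ← hT]
    refine (image_congr fun j hj => ?_).trans T.image_nth_range
    have hj : j < k := by simpa [hT] using hj
    have := hsame (j + 1) (by rw [mem_Icc]; omega)
    rwa [concatSorted_of_le (by omega), concatSorted_of_lt (by omega), Nat.add_sub_cancel,
      show k + (j + 1) - (k + 1) = j by omega] at this
  · rw [sum_concatSorted_left hS, sum_concatSorted_right hT]
    exact hsum

theorem Finset.card_le_of_injOn_of_abs_le {α : Type*} {s : Finset α} {f : α → ℤ} {B : ℝ}
    (hB : 0 ≤ B) (hf : Set.InjOn f s) (hfB : ∀ x ∈ s, |(f x : ℝ)| ≤ B) :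
    (#s : ℝ) ≤ 2 * B + 1 := by
  set N := ⌊B⌋
  have hmaps : Set.MapsTo f s (Icc (-N) N) := by
    intro x hx
    have h := abs_le.1 (hfB x hx)
    simp only [coe_Icc, Set.mem_Icc, neg_le, N]
    constructor <;> apply Int.le_floor.2 <;> push_cast <;> linarith
  have hcard : (#s : ℤ) ≤ 2 * N + 1 := by
    have h0 : 0 ≤ N := Int.floor_nonneg.2 hB
    have h1 := card_le_card_of_injOn f hmaps hf
    have h2 := Int.card_Icc_of_le (-N) N (by omega)
    omega
  have hN : (N : ℝ) ≤ B := Int.floor_le B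
  have : (#s : ℝ) ≤ 2 * N + 1 := by exact_mod_cast hcard
  linarith

theorem le_mul_rpow_inv_of_choose_le {n k : ℕ} (hk : 1 ≤ k) {B X : ℝ} (hB : 0 ≤ B)
    (hX : 1 ≤ X) (h : (n.choose k : ℝ) ≤ B * X) :
    (n : ℝ) ≤ ((k.factorial * B) ^ (k⁻¹ : ℝ) + (k - 1)) * X ^ (k⁻¹ : ℝ) := by
  have hpow : ((n + 1 - k : ℕ) : ℝ) ^ k ≤ k.factorial * B * X := by
    have := Nat.pow_le_choose (α := ℝ) k n
    rw [div_le_iff₀ (by positivity)] at this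
    nlinarith [Nat.factorial_pos k]
  have hroot : ((n + 1 - k : ℕ) : ℝ) ≤ (k.factorial * B) ^ (k⁻¹ : ℝ) * X ^ (k⁻¹ : ℝ) := by
    rw [← Real.mul_rpow (by positivity) (by linarith),
      ← Real.pow_rpow_inv_natCast (n + 1 - k : ℕ).cast_nonneg (by omega : k ≠ 0)]
    exact Real.rpow_le_rpow (by positivity) hpow (by positivity)
  have hX' : 1 ≤ X ^ (k⁻¹ : ℝ) := Real.one_le_rpow hX (by positivity)
  have hn : (n : ℝ) ≤ ((n + 1 - k : ℕ) : ℝ) + (k - 1) := by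
    have := Nat.cast_le (α := ℝ).2 (show n ≤ (n + 1 - k) + (k - 1) by omega)
    push_cast [Nat.cast_sub hk] at this
    exact this
  have hk1 : (0 : ℝ) ≤ k - 1 := sub_nonneg.2 (by exact_mod_cast hk)
  nlinarith [mul_le_mul_of_nonneg_left hX' hk1]

/-- an admissible set of primes in `[1, M]` for coefficients obeying the
Deligne bound satisfies `binomial (|D|, k) ≤ 4k·M^((2k-1)/2) + 1`, and consequently
`|D| ≪_k M^((2k-1)/(2k))`. -/
theorem stmt_4 (k : ℕ) (hk : 1 ≤ k) :
    ∃ C : ℝ, 0 < C ∧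
      ∀ (M : ℝ), 2 ≤ M →
      ∀ (a : ℕ → ℤ),
        (∀ p : ℕ, p.Prime → (p : ℝ) ≤ M →
          |(a p : ℝ)| ≤ 2 * (p : ℝ) ^ ((2 * k - 1 : ℝ) / 2)) →
      ∀ (D : Finset ℕ), (∀ p ∈ D, Nat.Prime p ∧ 1 ≤ p ∧ (p : ℝ) ≤ M) →
        Admissible k a D →
        ((D.card.choose k : ℝ) ≤ 4 * k * M ^ ((2 * k - 1 : ℝ) / 2) + 1 ∧
          (D.card : ℝ) ≤ C * M ^ ((2 * k - 1 : ℝ) / (2 * k))) := by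
  have hk1 : (1 : ℝ) ≤ k := by exact_mod_cast hk
  set e : ℝ := (2 * k - 1 : ℝ) / 2
  have he : 0 ≤ e := by simp only [e]; linarith
  refine ⟨(k.factorial * (4 * k + 1)) ^ (k⁻¹ : ℝ) + (k - 1),
    add_pos_of_pos_of_nonneg (by positivity) (by linarith), ?_⟩
  intro M hM a ha D hD hadm
  have hMe : 1 ≤ M ^ e := Real.one_le_rpow (by linarith) he
  have hsum : ∀ S ∈ D.powersetCard k, |((∑ p ∈ S, a p : ℤ) : ℝ)| ≤ k * (2 * M ^ e) := by
    intro S hS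
    obtain ⟨hSD, hSk⟩ := mem_powersetCard.1 hS
    push_cast
    refine (abs_sum_le_sum_abs _ _).trans ?_
    rw [← hSk, ← nsmul_eq_mul]
    refine sum_le_card_nsmul _ _ _ fun p hp => ?_
    obtain ⟨hp, -, hpM⟩ := hD p (hSD hp)
    exact (ha p hp hpM).trans (by gcongr)
  have hchoose : (D.card.choose k : ℝ) ≤ 4 * k * M ^ e + 1 := by
    have := card_le_of_injOn_of_abs_le (by positivity) hadm.injOn_sum hsum
    rw [card_powersetCard] at this
    linarith
  refine ⟨hchoose, ?_⟩
  have := le_mul_rpow_inv_of_choose_le hk (by positivity) hMe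
    (hchoose.trans (by nlinarith : 4 * k * M ^ e + 1 ≤ (4 * k + 1) * M ^ e))
  rwa [← Real.rpow_mul (by linarith), show e * (k : ℝ)⁻¹ = (2 * k - 1) / (2 * k) by
    simp only [e]; field_simp] at this
end

section
/- Let P be a set of primes and D ⊆ P a maximal admissible subset with |D| ≥ 2k. Then for every prime p ∈ P \ D there exist primes p_1,…,p_{2k-1} ∈ D such that a(p) = Σ_{i=1}^{k} a(p_i) − Σ_{i=k+1}^{2k-1} a(p_i). -/
/-!
Via increasing enumerations, admissibility of `D` says exactly that `A ↦ ∑_{x ∈ A} a x` is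
injective on the `k`-subsets of `D`. If `D ∪ {p}` is not admissible, pick distinct `k`-subsets
`A ≠ B` of `D ∪ {p}` with equal sums. They cannot both avoid `p`, since `D` is admissible. Nor can
they both contain `p`: as `|A ∪ B| ≤ 2k ≤ |D|`, some `d ∈ D` lies outside `A ∪ B`, and replacing `p`
by `d` in both gives a collision inside `D`. So `p` lies in exactly one of them, say `A`, and
`a p = ∑_B a - ∑_{A \ {p}} a` with `|B| = k`, `|A \ {p}| = k - 1`.
-/

open Finset

theorem StrictMonoOn.eqOn_of_image_eq {β γ : Type*} [LinearOrder β] [WellFoundedLT β]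
    [Preorder γ] {f g : β → γ} {s : Set β} (hf : StrictMonoOn f s) (hg : StrictMonoOn g s)
    (h : f '' s = g '' s) : s.EqOn f g := by
  rw [← Set.domRestrict_eq_domRestrict_iff, ← hf.domRestrict.range_inj hg.domRestrict,
    Set.range_domRestrict, Set.range_domRestrict, h]

theorem strictMonoOn_Icc_iff {α β : Type*} [Preorder α] [Preorder β] {f : α → β} {m n : α} :
    (∀ i j, m ≤ i → i < j → j ≤ n → f i < f j) ↔ StrictMonoOn f (Set.Icc m n) :=
  ⟨fun h _ hi _ hj hij => h _ _ hi.1 hij hj.2,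
    fun h _ _ hi hij hj => h ⟨hi, hij.le.trans hj⟩ ⟨hi.trans hij.le, hj⟩ hij⟩

section StrictMonoOnIcc

variable {α β : Type*} [LinearOrder α] [LocallyFiniteOrder α] [Preorder β] [DecidableEq β]
  {q : α → β} {m n : α}

theorem card_image_Icc_of_strictMonoOn (hq : StrictMonoOn q (Set.Icc m n)) :
    #((Icc m n).image q) = #(Icc m n) :=
  card_image_of_injOn (by rw [coe_Icc]; exact hq.injOn)

theorem sum_image_Icc_of_strictMonoOn {M : Type*} [AddCommMonoid M] (a : β → M)
    (hq : StrictMonoOn q (Set.Icc m n)) :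
    ∑ x ∈ (Icc m n).image q, a x = ∑ i ∈ Icc m n, a (q i) :=
  sum_image (by rw [coe_Icc]; exact hq.injOn)

end StrictMonoOnIcc

theorem exists_strictMonoOn_image_Icc_eq (A : Finset ℕ) (m : ℕ) :
    ∃ f : ℕ → ℕ, StrictMonoOn f (Set.Icc (m + 1) (m + #A)) ∧
      (Icc (m + 1) (m + #A)).image f = A := by
  let f : ℕ → ℕ := fun i =>
    if h : i - (m + 1) < #A then A.orderEmbOfFin rfl ⟨i - (m + 1), h⟩ else 0
  have hf : StrictMonoOn f (Set.Icc (m + 1) (m + #A)) := by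
    intro i hi j hj hij
    simp only [Set.mem_Icc] at hi hj
    simp only [f, dif_pos (show i - (m + 1) < #A by omega),
      dif_pos (show j - (m + 1) < #A by omega)]
    exact (A.orderEmbOfFin rfl).strictMono (Fin.mk_lt_mk.2 (by omega))
  refine ⟨f, hf, eq_of_subset_of_card_le ?_ ?_⟩
  · refine image_subset_iff.2 fun i hi => ?_
    simp only [mem_Icc] at hi
    simp only [f, dif_pos (show i - (m + 1) < #A by omega)]
    exact A.orderEmbOfFin_mem rfl _
  · rw [card_image_Icc_of_strictMonoOn hf, Nat.card_Icc]
    omega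

theorem exists_strictMonoOn_append (S T : Finset ℕ) :
    ∃ q : ℕ → ℕ, StrictMonoOn q (Set.Icc 1 #S) ∧ StrictMonoOn q (Set.Icc (#S + 1) (#S + #T)) ∧
      (Icc 1 #S).image q = S ∧ (Icc (#S + 1) (#S + #T)).image q = T := by
  obtain ⟨f, hf, hfS⟩ := exists_strictMonoOn_image_Icc_eq S 0
  obtain ⟨g, hg, hgT⟩ := exists_strictMonoOn_image_Icc_eq T #S
  rw [zero_add, zero_add] at hf hfS
  have hqf : Set.EqOn f (fun i => if i ≤ #S then f i else g i) (Set.Icc 1 #S) :=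
    fun i hi => (if_pos hi.2).symm
  have hqg : Set.EqOn g (fun i => if i ≤ #S then f i else g i) (Set.Icc (#S + 1) (#S + #T)) :=
    fun i hi => (if_neg (by simp only [Set.mem_Icc] at hi; omega)).symm
  refine ⟨_, hf.congr hqf, hg.congr hqg, ?_, ?_⟩
  · rwa [← image_congr (by rwa [coe_Icc])]
  · rwa [← image_congr (by rwa [coe_Icc])]

theorem image_Icc_eq_image_Icc_iff {q : ℕ → ℕ} {k : ℕ} (hq₁ : StrictMonoOn q (Set.Icc 1 k))
    (hq₂ : StrictMonoOn q (Set.Icc (k + 1) (2 * k))) :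
    (Icc 1 k).image q = (Icc (k + 1) (2 * k)).image q ↔ ∀ i ∈ Icc 1 k, q i = q (k + i) := by
  have hshift : Icc (k + 1) (2 * k) = (Icc 1 k).image (k + ·) := by
    rw [image_add_left_Icc, two_mul]
  have hq₂' : StrictMonoOn (fun i => q (k + i)) (Set.Icc 1 k) :=
    fun i ⟨hi₁, hi₂⟩ j ⟨hj₁, hj₂⟩ hij => hq₂ ⟨by omega, by omega⟩ ⟨by omega, by omega⟩ (by omega)
  rw [hshift, image_image]
  refine ⟨fun h i hi => hq₁.eqOn_of_image_eq hq₂' ?_ (by rwa [← coe_Icc]), image_congr⟩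
  simpa only [coe_image, coe_Icc, Function.comp_def] using congrArg ((↑) : Finset ℕ → Set ℕ) h

theorem admissible_iff_injOn {k : ℕ} {a : ℕ → ℤ} {D : Finset ℕ} :
    Admissible k a D ↔ Set.InjOn (fun A : Finset ℕ => ∑ x ∈ A, a x) (D.powersetCard k) := by
  constructor
  · intro hadm A hA B hB hAB
    rw [mem_coe, mem_powersetCard] at hA hB
    by_contra hne
    obtain ⟨q, hq₁, hq₂, hqA, hqB⟩ := exists_strictMonoOn_append A B
    rw [hA.2] at hq₁ hqA
    rw [hA.2, hB.2, ← two_mul] at hq₂ hqB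
    refine hadm q (fun i hi => ?_) (strictMonoOn_Icc_iff.2 hq₁) (strictMonoOn_Icc_iff.2 hq₂)
      ?_ ?_
    · rw [mem_Icc] at hi
      rcases le_or_gt i k with hik | hik
      · exact hA.1 (hqA ▸ mem_image_of_mem q (mem_Icc.2 ⟨hi.1, hik⟩))
      · exact hB.1 (hqB ▸ mem_image_of_mem q (mem_Icc.2 ⟨hik, hi.2⟩))
    · by_contra! hsame
      exact hne (hqA.symm.trans (((image_Icc_eq_image_Icc_iff hq₁ hq₂).2 hsame).trans hqB))
    · rwa [← sum_image_Icc_of_strictMonoOn a hq₁, ← sum_image_Icc_of_strictMonoOn a hq₂, hqA,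
        hqB]
  · intro hinj q hqD hq₁ hq₂ hdiff hsum
    rw [strictMonoOn_Icc_iff] at hq₁ hq₂
    have hmem : ∀ {m n : ℕ}, StrictMonoOn q (Set.Icc m n) → Icc m n ⊆ Icc 1 (2 * k) →
        n + 1 - m = k → (Icc m n).image q ∈ D.powersetCard k := by
      intro m n hq hmn hcard
      rw [mem_powersetCard, card_image_Icc_of_strictMonoOn hq, Nat.card_Icc, hcard]
      exact ⟨image_subset_iff.2 fun i hi => hqD i (hmn hi), rfl⟩
    obtain ⟨i, hi, hne⟩ := hdiff
    refine hne ((image_Icc_eq_image_Icc_iff hq₁ hq₂).1 (hinj ?_ ?_ ?_) i hi)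
    · exact hmem hq₁ (Icc_subset_Icc le_rfl (by omega)) (by omega)
    · exact hmem hq₂ (Icc_subset_Icc (by omega) le_rfl) (by omega)
    · simpa only [sum_image_Icc_of_strictMonoOn a hq₁, sum_image_Icc_of_strictMonoOn a hq₂]

section PowersetCardInsert

variable {α M : Type*} [DecidableEq α] [AddCommGroup M] {k : ℕ} {a : α → M} {D A B : Finset α}
  {p : α}

theorem erase_mem_powersetCard_of_mem_insert (hA : A ∈ (insert p D).powersetCard k)
    (hpA : p ∈ A) : A.erase p ∈ D.powersetCard (k - 1) := by
  rw [mem_powersetCard] at hA ⊢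
  exact ⟨subset_insert_iff.1 hA.1, by rw [card_erase_of_mem hpA, hA.2]⟩

theorem mem_powersetCard_of_mem_insert (hA : A ∈ (insert p D).powersetCard k) (hpA : p ∉ A) :
    A ∈ D.powersetCard k := by
  rw [mem_powersetCard, ← subset_insert_iff_of_notMem hpA]
  exact mem_powersetCard.1 hA

theorem insert_erase_mem_powersetCard {d : α} (hA : A ∈ (insert p D).powersetCard k)
    (hpA : p ∈ A) (hdA : d ∉ A) (hdD : d ∈ D) : insert d (A.erase p) ∈ D.powersetCard k := by
  have hA' := mem_powersetCard.1 (erase_mem_powersetCard_of_mem_insert hA hpA)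
  have hk : 0 < k := (mem_powersetCard.1 hA).2 ▸ card_pos.2 ⟨p, hpA⟩
  rw [mem_powersetCard, card_insert_of_notMem fun h => hdA (mem_of_mem_erase h), hA'.2]
  exact ⟨insert_subset hdD hA'.1, Nat.sub_add_cancel hk⟩

theorem eq_of_sum_eq_of_mem_of_mem
    (hD : Set.InjOn (fun A : Finset α => ∑ x ∈ A, a x) (D.powersetCard k)) (hpD : p ∉ D)
    (hcard : 2 * k ≤ #D) (hA : A ∈ (insert p D).powersetCard k)
    (hB : B ∈ (insert p D).powersetCard k) (hpA : p ∈ A) (hpB : p ∈ B)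
    (hAB : ∑ x ∈ A, a x = ∑ x ∈ B, a x) : A = B := by
  obtain ⟨d, hdD, hdAB⟩ : ∃ d ∈ D, d ∉ A ∪ B := by
    by_contra! hD_sub
    have := card_le_card (insert_subset (mem_union_left B hpA) hD_sub)
    rw [card_insert_of_notMem hpD] at this
    have := card_union_le A B
    rw [(mem_powersetCard.1 hA).2, (mem_powersetCard.1 hB).2] at this
    omega
  rw [mem_union, not_or] at hdAB
  have hdA' : d ∉ A.erase p := fun h => hdAB.1 (mem_of_mem_erase h)
  have hdB' : d ∉ B.erase p := fun h => hdAB.2 (mem_of_mem_erase h)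
  have hswap := hD (insert_erase_mem_powersetCard hA hpA hdAB.1 hdD)
    (insert_erase_mem_powersetCard hB hpB hdAB.2 hdD)
    (by simp only [sum_insert hdA', sum_insert hdB', sum_erase_eq_sub hpA, sum_erase_eq_sub hpB,
      hAB])
  rw [← insert_erase hpA, ← insert_erase hpB, ← erase_insert hdA', ← erase_insert hdB', hswap]

theorem exists_eq_sum_sub_sum_of_not_injOn_insert
    (hD : Set.InjOn (fun A : Finset α => ∑ x ∈ A, a x) (D.powersetCard k)) (hpD : p ∉ D)
    (hcard : 2 * k ≤ #D)
    (hins : ¬ Set.InjOn (fun A : Finset α => ∑ x ∈ A, a x) ((insert p D).powersetCard k)) :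
    ∃ S ∈ D.powersetCard k, ∃ T ∈ D.powersetCard (k - 1), a p = ∑ x ∈ S, a x - ∑ x ∈ T, a x := by
  have of_mem_of_notMem : ∀ {A B : Finset α}, A ∈ (insert p D).powersetCard k →
      B ∈ (insert p D).powersetCard k → p ∈ A → p ∉ B → ∑ x ∈ A, a x = ∑ x ∈ B, a x →
      ∃ S ∈ D.powersetCard k, ∃ T ∈ D.powersetCard (k - 1),
        a p = ∑ x ∈ S, a x - ∑ x ∈ T, a x := fun hA hB hpA hpB hAB =>
    ⟨_, mem_powersetCard_of_mem_insert hB hpB, _, erase_mem_powersetCard_of_mem_insert hA hpA,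
      by rw [← hAB, sum_erase_eq_sub hpA, sub_sub_cancel]⟩
  simp only [Set.InjOn, mem_coe, not_forall] at hins
  obtain ⟨A, hA, B, hB, hAB, hne⟩ := hins
  by_cases hpA : p ∈ A <;> by_cases hpB : p ∈ B
  · exact absurd (eq_of_sum_eq_of_mem_of_mem hD hpD hcard hA hB hpA hpB hAB) hne
  · exact of_mem_of_notMem hA hB hpA hpB hAB
  · exact of_mem_of_notMem hB hA hpB hpA hAB.symm
  · exact absurd (hD (mem_powersetCard_of_mem_insert hA hpA)
      (mem_powersetCard_of_mem_insert hB hpB) hAB) hne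

end PowersetCardInsert

theorem exists_tuple_eq_sum_sub_sum {k : ℕ} {D S T : Finset ℕ} (a : ℕ → ℤ)
    (hS : S ∈ D.powersetCard k) (hT : T ∈ D.powersetCard (k - 1)) :
    ∃ q : ℕ → ℕ, (∀ i ∈ Icc 1 (2 * k - 1), q i ∈ D) ∧
      ∑ x ∈ S, a x - ∑ x ∈ T, a x =
        ∑ i ∈ Icc 1 k, a (q i) - ∑ i ∈ Icc (k + 1) (2 * k - 1), a (q i) := by
  rw [mem_powersetCard] at hS hT
  obtain ⟨q, hq₁, hq₂, hqS, hqT⟩ := exists_strictMonoOn_append S T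
  rw [hS.2] at hq₁ hqS
  rw [hS.2, hT.2, show k + (k - 1) = 2 * k - 1 by omega] at hq₂ hqT
  refine ⟨q, fun i hi => ?_, ?_⟩
  · rw [mem_Icc] at hi
    rcases le_or_gt i k with hik | hik
    · exact hS.1 (hqS ▸ mem_image_of_mem q (mem_Icc.2 ⟨hi.1, hik⟩))
    · exact hT.1 (hqT ▸ mem_image_of_mem q (mem_Icc.2 ⟨hik, hi.2⟩))
  · rw [← sum_image_Icc_of_strictMonoOn a hq₁, ← sum_image_Icc_of_strictMonoOn a hq₂, hqS, hqT]

theorem stmt_5_general (k : ℕ) (a : ℕ → ℤ) (P : Set ℕ) (D : Finset ℕ)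
    (hDadm : Admissible k a D) (hDcard : 2 * k ≤ D.card)
    (hmax : ∀ p ∈ P, p ∉ D → ¬ Admissible k a (insert p D)) :
    ∀ p ∈ P, p ∉ D →
      ∃ q : ℕ → ℕ, (∀ i ∈ Finset.Icc 1 (2 * k - 1), q i ∈ D) ∧
        a p = ∑ i ∈ Finset.Icc 1 k, a (q i)
          - ∑ i ∈ Finset.Icc (k + 1) (2 * k - 1), a (q i) := by
  intro p hp hpD
  obtain ⟨S, hS, T, hT, hpST⟩ := exists_eq_sum_sub_sum_of_not_injOn_insert
    (admissible_iff_injOn.1 hDadm) hpD hDcard (mt admissible_iff_injOn.2 (hmax p hp hpD))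
  obtain ⟨q, hqD, hq⟩ := exists_tuple_eq_sum_sub_sum a hS hT
  exact ⟨q, hqD, hpST.trans hq⟩

/-- if `D ⊆ P` is a maximal admissible subset with `|D| ≥ 2k`, then every
prime `p ∈ P \ D` has `a p` equal to a signed sum of `2k-1` coefficients from `D`. -/
theorem stmt_5 (k : ℕ) (hk : 1 ≤ k) (a : ℕ → ℤ) (P : Set ℕ)
    (hP : ∀ p ∈ P, Nat.Prime p) (D : Finset ℕ) (hDP : ↑D ⊆ P)
    (hDadm : Admissible k a D) (hDcard : 2 * k ≤ D.card)
    (hmax : ∀ p ∈ P, p ∉ D → ¬ Admissible k a (insert p D)) :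
    ∀ p ∈ P, p ∉ D →
      ∃ q : ℕ → ℕ, (∀ i ∈ Finset.Icc 1 (2 * k - 1), q i ∈ D) ∧
        a p = ∑ i ∈ Finset.Icc 1 k, a (q i)
          - ∑ i ∈ Finset.Icc (k + 1) (2 * k - 1), a (q i) :=
  stmt_5_general k a P D hDadm hDcard hmax
end

section
/- If a maximal admissible set D of primes has |D| ≥ 2k, and p ∉ D is a prime such that D ∪ {p} is not admissible, then in any witnessing pair of k-tuples from D ∪ {p} with equal a-sums, the prime p occurs exactly once (it cannot occur in both tuples). -/
open Finset

section Blocks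

variable {k l n : ℕ}

theorem Icc_eq_image_univ_fin (h : l + k = n + 1) :
    Icc l n = univ.image fun j : Fin k => l + (j : ℕ) := by
  ext i
  simp only [mem_Icc, mem_image, mem_univ, true_and]
  constructor
  · rintro ⟨hli, hin⟩
    exact ⟨⟨i - l, by omega⟩, by simp only; omega⟩
  · rintro ⟨j, rfl⟩
    omega

theorem sum_Icc_eq_sum_fin {M : Type*} [AddCommMonoid M] (F : ℕ → M) (h : l + k = n + 1) :
    ∑ i ∈ Icc l n, F i = ∑ j : Fin k, F (l + j) := by
  rw [Icc_eq_image_univ_fin h, sum_image fun i _ j _ hij => Fin.ext (by simpa using hij)]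

theorem StrictMonoOn.strictMono_add_fin {q : ℕ → ℕ} (hq : StrictMonoOn q (Set.Icc l n))
    (h : l + k = n + 1) : StrictMono fun j : Fin k => q (l + j) := fun i j hij =>
  hq (by simp; omega) (by simp; omega) (by simpa using Fin.lt_def.1 hij)

theorem card_image_Icc {q : ℕ → ℕ} (hq : StrictMonoOn q (Set.Icc l n)) (h : l + k = n + 1) :
    #((Icc l n).image q) = k := by
  rw [card_image_of_injOn (by simpa using hq.injOn), Nat.card_Icc]
  omega

theorem StrictMono.eq_of_image_univ_eq {α : Type*} [LinearOrder α] {f g : Fin k → α}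
    (hf : StrictMono f) (hg : StrictMono g) (h : univ.image f = univ.image g) : f = g := by
  rw [← hf.range_inj hg, ← Set.image_univ, ← Set.image_univ, ← coe_univ, ← coe_image,
    ← coe_image, h]

theorem eq_of_image_Icc_eq {q : ℕ → ℕ} {l' n' : ℕ} (hq : StrictMonoOn q (Set.Icc l n))
    (hq' : StrictMonoOn q (Set.Icc l' n')) (hn : l + k = n + 1) (hn' : l' + k = n' + 1)
    (h : (Icc l n).image q = (Icc l' n').image q) {j : ℕ} (hj : j < k) :
    q (l + j) = q (l' + j) := by
  rw [Icc_eq_image_univ_fin hn, Icc_eq_image_univ_fin hn', image_image, image_image] at h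
  exact congrFun ((hq.strictMono_add_fin hn).eq_of_image_univ_eq (hq'.strictMono_add_fin hn') h)
    ⟨j, hj⟩

end Blocks

section Exchange

variable {α : Type*} [DecidableEq α] {A B D : Finset α} {p r : α}

theorem card_insert_erase_of_mem_of_notMem (hp : p ∈ A) (hr : r ∉ A) :
    #(insert r (A.erase p)) = #A := by
  rw [card_insert_of_notMem fun h => hr (mem_of_mem_erase h), card_erase_add_one hp]

theorem sum_insert_erase_of_mem_of_notMem {M : Type*} [AddCommGroup M] (f : α → M) (hp : p ∈ A)
    (hr : r ∉ A) : ∑ x ∈ insert r (A.erase p), f x = ∑ x ∈ A, f x - f p + f r := by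
  rw [sum_insert fun h => hr (mem_of_mem_erase h), sum_erase_eq_sub hp, add_comm]

theorem eq_of_insert_erase_eq (hpA : p ∈ A) (hpB : p ∈ B) (hrA : r ∉ A) (hrB : r ∉ B)
    (h : insert r (A.erase p) = insert r (B.erase p)) : A = B := by
  have := congrArg (fun C => insert p (C.erase r)) h
  simpa only [erase_insert fun h => hrA (mem_of_mem_erase h),
    erase_insert fun h => hrB (mem_of_mem_erase h), insert_erase hpA, insert_erase hpB] using this

theorem insert_erase_subset (hA : A ⊆ insert p D) (hr : r ∈ D) : insert r (A.erase p) ⊆ D :=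
  insert_subset hr (subset_insert_iff.1 hA)

end Exchange

section PairSeq

variable {k : ℕ}

def pairSeq (f g : Fin k → ℕ) (i : ℕ) : ℕ :=
  if h : i - 1 < k + k then Fin.append f g ⟨i - 1, h⟩ else 0

theorem pairSeq_one_add (f g : Fin k → ℕ) (j : Fin k) : pairSeq f g (1 + j) = f j := by
  rw [pairSeq, dif_pos (by omega), ← Fin.append_left f g j]
  congr 1
  ext
  simp

theorem pairSeq_add_one_add (f g : Fin k → ℕ) (j : Fin k) : pairSeq f g (k + 1 + j) = g j := by
  rw [pairSeq, dif_pos (by omega), ← Fin.append_right f g j]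
  congr 1
  ext
  simp only [Fin.natAdd]
  omega

end PairSeq

namespace Admissible

variable {k : ℕ} {a : ℕ → ℤ} {D : Finset ℕ}

theorem sum_ne_of_strictMono (hD : Admissible k a D) {f g : Fin k → ℕ} (hf : StrictMono f)
    (hg : StrictMono g) (hfD : ∀ j, f j ∈ D) (hgD : ∀ j, g j ∈ D) (hfg : f ≠ g) :
    ∑ j, a (f j) ≠ ∑ j, a (g j) := by
  have h₁ : Icc 1 k = univ.image fun j : Fin k => 1 + (j : ℕ) := Icc_eq_image_univ_fin (by omega)
  have h₂ : Icc (k + 1) (2 * k) = univ.image fun j : Fin k => k + 1 + (j : ℕ) :=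
    Icc_eq_image_univ_fin (by omega)
  intro hsum
  refine hD (pairSeq f g) (fun i hi => ?_) (fun i j hi hij hj => ?_) (fun i j hi hij hj => ?_)
    ?_ ?_
  · rcases le_or_gt i k with hik | hik
    · obtain ⟨j, -, rfl⟩ := mem_image.1 (h₁ ▸ mem_Icc.2 ⟨(mem_Icc.1 hi).1, hik⟩)
      exact pairSeq_one_add f g j ▸ hfD j
    · obtain ⟨j, -, rfl⟩ := mem_image.1 (h₂ ▸ mem_Icc.2 ⟨hik, (mem_Icc.1 hi).2⟩)
      exact pairSeq_add_one_add f g j ▸ hgD j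
  · obtain ⟨i, -, rfl⟩ := mem_image.1 (h₁ ▸ mem_Icc.2 ⟨hi, by omega⟩)
    obtain ⟨j, -, rfl⟩ := mem_image.1 (h₁ ▸ mem_Icc.2 ⟨by omega, hj⟩)
    rw [pairSeq_one_add, pairSeq_one_add]
    exact hf (Fin.lt_def.2 (by omega))
  · obtain ⟨i, -, rfl⟩ := mem_image.1 (h₂ ▸ mem_Icc.2 ⟨hi, by omega⟩)
    obtain ⟨j, -, rfl⟩ := mem_image.1 (h₂ ▸ mem_Icc.2 ⟨by omega, hj⟩)
    rw [pairSeq_add_one_add, pairSeq_add_one_add]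
    exact hg (Fin.lt_def.2 (by omega))
  · obtain ⟨j, hj⟩ := Function.ne_iff.1 hfg
    refine ⟨1 + j, mem_Icc.2 ⟨by omega, by omega⟩, ?_⟩
    rwa [pairSeq_one_add, ← add_assoc, pairSeq_add_one_add]
  · rw [sum_Icc_eq_sum_fin _ (by omega : 1 + k = k + 1),
      sum_Icc_eq_sum_fin _ (by omega : k + 1 + k = 2 * k + 1)]
    simpa only [pairSeq_one_add, pairSeq_add_one_add] using hsum

theorem sum_ne (hD : Admissible k a D) {A B : Finset ℕ} (hA : A ⊆ D) (hB : B ⊆ D)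
    (hAk : #A = k) (hBk : #B = k) (hAB : A ≠ B) : ∑ x ∈ A, a x ≠ ∑ x ∈ B, a x := by
  rw [← map_orderEmbOfFin_univ A hAk, ← map_orderEmbOfFin_univ B hBk, sum_map, sum_map]
  refine hD.sum_ne_of_strictMono (orderEmbOfFin A hAk).strictMono
    (orderEmbOfFin B hBk).strictMono (fun j => hA (orderEmbOfFin_mem A hAk j))
    (fun j => hB (orderEmbOfFin_mem B hBk j)) fun h => hAB ?_
  rw [← image_orderEmbOfFin_univ A hAk, ← image_orderEmbOfFin_univ B hBk]
  exact congrArg (univ.image ·) h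

theorem sum_ne_of_mem_of_mem (hD : Admissible k a D) (hDcard : 2 * k ≤ #D) {p : ℕ} (hpD : p ∉ D)
    {A B : Finset ℕ} (hA : A ⊆ insert p D) (hB : B ⊆ insert p D) (hAk : #A = k) (hBk : #B = k)
    (hAB : A ≠ B) (hpA : p ∈ A) (hpB : p ∈ B) : ∑ x ∈ A, a x ≠ ∑ x ∈ B, a x := by
  obtain ⟨r, hrD, hr⟩ : ∃ r ∈ D, r ∉ A ∪ B := by
    by_contra! h
    have hsub : D ⊆ (A ∪ B).erase p := fun x hx =>
      mem_erase.2 ⟨ne_of_mem_of_not_mem hx hpD, h x hx⟩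
    have hle := card_le_card hsub
    rw [card_erase_of_mem (mem_union_left _ hpA)] at hle
    have := card_union_le A B
    have := card_pos.2 ⟨p, hpA⟩
    omega
  obtain ⟨hrA, hrB⟩ := notMem_union.1 hr
  intro hsum
  refine hD.sum_ne (insert_erase_subset hA hrD) (insert_erase_subset hB hrD)
    (by rwa [card_insert_erase_of_mem_of_notMem hpA hrA])
    (by rwa [card_insert_erase_of_mem_of_notMem hpB hrB])
    (fun h => hAB (eq_of_insert_erase_eq hpA hpB hrA hrB h)) ?_
  rw [sum_insert_erase_of_mem_of_notMem a hpA hrA, sum_insert_erase_of_mem_of_notMem a hpB hrB,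
    hsum]

end Admissible

theorem stmt_6_general (k : ℕ) (a : ℕ → ℤ) (D : Finset ℕ)
    (hDadm : Admissible k a D) (hDcard : 2 * k ≤ D.card)
    (p : ℕ) (hpD : p ∉ D)
    (q : ℕ → ℕ)
    (hmem : ∀ i ∈ Finset.Icc 1 (2 * k), q i ∈ insert p D)
    (hmono₁ : ∀ i j, 1 ≤ i → i < j → j ≤ k → q i < q j)
    (hmono₂ : ∀ i j, k + 1 ≤ i → i < j → j ≤ 2 * k → q i < q j)
    (hdist : ∃ i ∈ Finset.Icc 1 k, q i ≠ q (k + i))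
    (hsum : ∑ i ∈ Finset.Icc 1 k, a (q i) = ∑ i ∈ Finset.Icc (k + 1) (2 * k), a (q i)) :
    (∃ i ∈ Finset.Icc 1 (2 * k), q i = p) ∧
    ¬ ((∃ i ∈ Finset.Icc 1 k, q i = p) ∧ (∃ i ∈ Finset.Icc (k + 1) (2 * k), q i = p)) := by
  refine ⟨?_, ?_⟩
  · by_contra! hq
    exact hDadm q (fun i hi => (mem_insert.1 (hmem i hi)).resolve_left (hq i hi)) hmono₁ hmono₂
      hdist hsum
  rintro ⟨⟨i, hi, rfl⟩, ⟨j, hj, hjp⟩⟩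
  have hq₁ : StrictMonoOn q (Set.Icc 1 k) := fun i hi j hj hij => hmono₁ i j hi.1 hij hj.2
  have hq₂ : StrictMonoOn q (Set.Icc (k + 1) (2 * k)) := fun i hi j hj hij =>
    hmono₂ i j hi.1 hij hj.2
  have hsub : ∀ {l n}, 1 ≤ l → n ≤ 2 * k → (Icc l n).image q ⊆ insert (q i) D := fun hl hn =>
    image_subset_iff.2 fun x hx => hmem x (by simp only [mem_Icc] at hx ⊢; omega)
  refine hDadm.sum_ne_of_mem_of_mem hDcard hpD (hsub le_rfl (by omega)) (hsub (by omega) le_rfl)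
    (card_image_Icc hq₁ (by omega)) (card_image_Icc hq₂ (by omega)) (fun h => ?_)
    (mem_image_of_mem q hi) (hjp ▸ mem_image_of_mem q hj) ?_
  · obtain ⟨m, hm, hne⟩ := hdist
    rw [mem_Icc] at hm
    have := eq_of_image_Icc_eq (k := k) hq₁ hq₂ (by omega) (by omega) h (j := m - 1) (by omega)
    rw [show 1 + (m - 1) = m by omega, show k + 1 + (m - 1) = k + m by omega] at this
    exact hne this
  · rwa [sum_image (by simpa using hq₁.injOn), sum_image (by simpa using hq₂.injOn)]

/-- if `D` is admissible with `|D| ≥ 2k` and `p ∉ D` is a prime such that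
`insert p D` is not admissible, then in any witnessing pair of increasing `k`-tuples
from `D ∪ {p}` with equal `a`-sums, the prime `p` occurs exactly once: it occurs in
some tuple, but not in both tuples. -/
theorem stmt_6 (k : ℕ) (hk : 1 ≤ k) (a : ℕ → ℤ) (D : Finset ℕ)
    (hD : ∀ q ∈ D, Nat.Prime q) (hDadm : Admissible k a D) (hDcard : 2 * k ≤ D.card)
    (p : ℕ) (hp : Nat.Prime p) (hpD : p ∉ D)
    (hnotadm : ¬ Admissible k a (insert p D))
    (q : ℕ → ℕ)
    (hmem : ∀ i ∈ Finset.Icc 1 (2 * k), q i ∈ insert p D)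
    (hmono₁ : ∀ i j, 1 ≤ i → i < j → j ≤ k → q i < q j)
    (hmono₂ : ∀ i j, k + 1 ≤ i → i < j → j ≤ 2 * k → q i < q j)
    (hdist : ∃ i ∈ Finset.Icc 1 k, q i ≠ q (k + i))
    (hsum : ∑ i ∈ Finset.Icc 1 k, a (q i) = ∑ i ∈ Finset.Icc (k + 1) (2 * k), a (q i)) :
    (∃ i ∈ Finset.Icc 1 (2 * k), q i = p) ∧
    ¬ ((∃ i ∈ Finset.Icc 1 k, q i = p) ∧ (∃ i ∈ Finset.Icc (k + 1) (2 * k), q i = p)) :=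
  stmt_6_general k a D hDadm hDcard p hpD q hmem hmono₁ hmono₂ hdist hsum
end

section
/- If t is the largest index 1 ≤ t ≤ k with q_t ≠ q_{k+t}, and Σ_{i=1}^k a(q_i) = Σ_{i=k+1}^{2k} a(q_i), then Σ_{i=1}^t a(q_i) = Σ_{i=k+1}^{k+t} a(q_i), and consequently |a(q_{k+t})| ≤ k(|a(q_t)| + |a(q_{k+t-1})|). -/
/-!
Cancelling the common tail `q (t+1) = q (k+t+1), …, q k = q (2k)` from the two equal sums
leaves `∑_{i ≤ t} a (q i) = ∑_{i ≤ t} a (q (k+i))`. Solving this for the last term `a (q (k+t))`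
expresses it as a difference of two sums of at most `k` terms each, and by the monotonicity of
`|a|` along each tuple every term of the first sum is bounded by `|a (q t)|` and every term of
the second by `|a (q (k+t-1))|`.
-/

open Finset

theorem sum_Icc_add_left_eq {M : Type*} [AddCommMonoid M] (f : ℕ → M) (m a b : ℕ) :
    ∑ i ∈ Icc (m + a) (m + b), f i = ∑ i ∈ Icc a b, f (m + i) := by
  rw [← map_add_left_Icc, sum_map]
  rfl

theorem sum_Icc_one_eq_of_eq_on_tail {M : Type*} [AddCommGroup M] {f g : ℕ → M} {t k : ℕ}
    (htk : t ≤ k) (htail : ∀ i, t < i → i ≤ k → f i = g i)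
    (hsum : ∑ i ∈ Icc 1 k, f i = ∑ i ∈ Icc 1 k, g i) :
    ∑ i ∈ Icc 1 t, f i = ∑ i ∈ Icc 1 t, g i := by
  have hsplit (h : ℕ → M) : ∑ i ∈ Icc 1 k, h i = ∑ i ∈ Icc 1 t, h i + ∑ i ∈ Ioc t k, h i := by
    have hIcc (n : ℕ) : Icc 1 n = Ioc 0 n := Icc_add_one_left_eq_Ioc 0 n
    rw [hIcc, hIcc]
    exact (sum_Ioc_consecutive h (Nat.zero_le t) htk).symm
  have htail_sum : ∑ i ∈ Ioc t k, f i = ∑ i ∈ Ioc t k, g i :=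
    sum_congr rfl fun i hi => htail i (mem_Ioc.1 hi).1 (mem_Ioc.1 hi).2
  rw [hsplit f, hsplit g, htail_sum] at hsum
  exact add_right_cancel hsum

theorem abs_sum_Icc_le_mul_abs_top {R : Type*} [Ring R] [LinearOrder R] [IsOrderedRing R]
    {f : ℕ → R} {m n N : ℕ} (hf : ∀ i, m ≤ i → i < n → |f i| ≤ |f n|)
    (hN : n + 1 - m ≤ N) :
    |∑ i ∈ Icc m n, f i| ≤ N * |f n| := by
  have hle_top : ∀ i ∈ Icc m n, |f i| ≤ |f n| := by
    intro i hi
    obtain ⟨hmi, hin⟩ := mem_Icc.1 hi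
    rcases hin.eq_or_lt with rfl | hlt
    · exact le_rfl
    · exact hf i hmi hlt
  calc |∑ i ∈ Icc m n, f i| ≤ ∑ i ∈ Icc m n, |f i| := abs_sum_le_sum_abs _ _
    _ ≤ #(Icc m n) • |f n| := sum_le_card_nsmul _ _ _ hle_top
    _ ≤ N * |f n| := by
      rw [Nat.card_Icc, nsmul_eq_mul]
      gcongr

theorem stmt_8_general (k : ℕ) (a : ℕ → ℤ) (q : ℕ → ℕ)
    (habs₁ : ∀ i j, 1 ≤ i → i < j → j ≤ k → |a (q i)| < |a (q j)|)
    (habs₂ : ∀ i j, k + 1 ≤ i → i < j → j ≤ 2 * k → |a (q i)| < |a (q j)|)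
    (t : ℕ) (ht1 : 1 ≤ t) (htk : t ≤ k)
    (htmax : ∀ i, t < i → i ≤ k → q i = q (k + i))
    (hsum : ∑ i ∈ Finset.Icc 1 k, a (q i) = ∑ i ∈ Finset.Icc (k + 1) (2 * k), a (q i)) :
    (∑ i ∈ Finset.Icc 1 t, a (q i) = ∑ i ∈ Finset.Icc (k + 1) (k + t), a (q i)) ∧
    |a (q (k + t))| ≤ (k : ℤ) * (|a (q t)| + |a (q (k + t - 1))|) := by
  have htrunc : ∑ i ∈ Icc 1 t, a (q i) = ∑ i ∈ Icc (k + 1) (k + t), a (q i) := by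
    rw [sum_Icc_add_left_eq]
    rw [two_mul, sum_Icc_add_left_eq] at hsum
    exact sum_Icc_one_eq_of_eq_on_tail htk (fun i hti hik => congrArg a (htmax i hti hik)) hsum
  refine ⟨htrunc, ?_⟩
  obtain ⟨s, rfl⟩ := Nat.exists_eq_add_of_le' ht1
  rw [show k + (s + 1) - 1 = k + s by omega]
  have hfirst : |∑ i ∈ Icc 1 (s + 1), a (q i)| ≤ k * |a (q (s + 1))| :=
    abs_sum_Icc_le_mul_abs_top (fun i hi hin => (habs₁ i _ hi hin htk).le) (by omega)
  have hsecond : |∑ i ∈ Icc (k + 1) (k + s), a (q i)| ≤ k * |a (q (k + s))| :=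
    abs_sum_Icc_le_mul_abs_top (fun i hi hin => (habs₂ i _ hi hin (by omega)).le) (by omega)
  have hlast : a (q (k + (s + 1))) =
      ∑ i ∈ Icc 1 (s + 1), a (q i) - ∑ i ∈ Icc (k + 1) (k + s), a (q i) := by
    rw [htrunc, ← add_assoc, sum_Icc_succ_top (by omega)]
    ring
  rw [hlast, mul_add]
  exact (abs_sub _ _).trans (add_le_add hfirst hsecond)

/-- if `t` is the largest index `1 ≤ t ≤ k` with `q t ≠ q (k+t)` and the
two `k`-tuple sums agree, then the truncated sums up to `t` agree, and
`|a (q (k+t))| ≤ k (|a (q t)| + |a (q (k+t-1))|)`. -/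
theorem stmt_8 (k : ℕ) (hk : 1 ≤ k) (a : ℕ → ℤ) (q : ℕ → ℕ)
    (hprime : ∀ i ∈ Finset.Icc 1 (2 * k), (q i).Prime)
    (hmono₁ : ∀ i j, 1 ≤ i → i < j → j ≤ k → q i < q j)
    (hmono₂ : ∀ i j, k + 1 ≤ i → i < j → j ≤ 2 * k → q i < q j)
    (habs₁ : ∀ i j, 1 ≤ i → i < j → j ≤ k → |a (q i)| < |a (q j)|)
    (habs₂ : ∀ i j, k + 1 ≤ i → i < j → j ≤ 2 * k → |a (q i)| < |a (q j)|)
    (t : ℕ) (ht1 : 1 ≤ t) (htk : t ≤ k)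
    (htne : q t ≠ q (k + t))
    (htmax : ∀ i, t < i → i ≤ k → q i = q (k + i))
    (hqt : q t < q (k + t))
    (hsum : ∑ i ∈ Finset.Icc 1 k, a (q i) = ∑ i ∈ Finset.Icc (k + 1) (2 * k), a (q i)) :
    (∑ i ∈ Finset.Icc 1 t, a (q i) = ∑ i ∈ Finset.Icc (k + 1) (k + t), a (q i)) ∧
    |a (q (k + t))| ≤ (k : ℤ) * (|a (q t)| + |a (q (k + t - 1))|) :=
  stmt_8_general k a q habs₁ habs₂ t ht1 htk htmax hsum
end

section
/- Suppose every sufficiently large integer Z (of either sign) with |Z| ≥ T can be represented as Z = Σ_{i=1}^{m} a(n_i) − Σ_{j=1}^{m} a(m_j) + r (0 ≤ r ≤ R, a(1) = 1) with all n_i, m_j coprime to n_f, where a(n_f) = −C₀ < 0 and a is multiplicative on coprime arguments. Then every sufficiently large integer Z₁ (of either sign) is a sum of at most (C₀+1)·m + C₀·R + C₀ values a(n). -/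
/-!
Multiplicativity gives `a (n_f * k) = -C₀ * a k` for `k` coprime to `n_f`, so
`-a k = a (n_f * k) + (C₀ - 1) * a k` is a sum of `C₀` values of `a`. Rewriting each of the
`m` negative terms of the signed representation this way, and the remainder `r` as
`r * a 1`, turns it into a sum of `m + C₀ * m + r` values of `a`.
-/

open Finset

def IsSumOfValues {M : Type*} [AddCommMonoid M] (a : ℕ → M) (ℓ : ℕ) (X : M) : Prop :=
  ∃ n : ℕ → ℕ, (∀ j, 0 < n j) ∧ X = ∑ j ∈ range ℓ, a (n j)

namespace IsSumOfValues

variable {M : Type*} [AddCommMonoid M] {a : ℕ → M}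

theorem zero : IsSumOfValues a 0 0 :=
  ⟨fun _ => 1, fun _ => one_pos, by simp⟩

theorem apply {k : ℕ} (hk : 0 < k) : IsSumOfValues a 1 (a k) :=
  ⟨fun _ => k, fun _ => hk, by simp⟩

theorem add {k l : ℕ} {X Y : M} (hX : IsSumOfValues a k X) (hY : IsSumOfValues a l Y) :
    IsSumOfValues a (k + l) (X + Y) := by
  obtain ⟨n, hn, rfl⟩ := hX
  obtain ⟨n', hn', rfl⟩ := hY
  refine ⟨fun j => if j < k then n j else n' (j - k), fun j => by dsimp only; split_ifs <;> simp [hn, hn'], ?_⟩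
  rw [sum_range_add]
  congr 1
  · exact sum_congr rfl fun j hj => by simp [mem_range.mp hj]
  · simp

theorem nsmul {k : ℕ} {X : M} (h : IsSumOfValues a k X) (c : ℕ) :
    IsSumOfValues a (c * k) (c • X) := by
  induction c with
  | zero => simpa using zero
  | succ c ih => simpa [add_mul, succ_nsmul] using ih.add h

theorem sum_range {m : ℕ} {f : ℕ → ℕ} (hf : ∀ i ∈ range m, 0 < f i) :
    IsSumOfValues a m (∑ i ∈ range m, a (f i)) := by
  induction m with
  | zero => simpa using zero
  | succ m ih =>
    rw [sum_range_succ]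
    exact (ih fun i hi => hf i (by simp at hi ⊢; omega)).add (apply (hf m (by simp)))

end IsSumOfValues

theorem isSumOfValues_neg_sum_range {R : Type*} [CommRing R] {a : ℕ → R}
    (hmul : ∀ u v : ℕ, Nat.Coprime u v → a (u * v) = a u * a v)
    {q C : ℕ} (hq : 0 < q) (hC : 0 < C) (haq : a q = -(C : R))
    {m : ℕ} {f : ℕ → ℕ} (hf : ∀ i ∈ range m, 0 < f i ∧ Nat.Coprime (f i) q) :
    IsSumOfValues a (C * m) (-∑ i ∈ range m, a (f i)) := by
  obtain ⟨c, rfl⟩ := Nat.exists_eq_add_one_of_ne_zero hC.ne'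
  have hneg : ∀ i ∈ range m, -a (f i) = a (q * f i) + c • a (f i) := fun i hi => by
    rw [hmul q (f i) (hf i hi).2.symm, haq, nsmul_eq_mul]
    push_cast
    ring
  have hqf := IsSumOfValues.sum_range (a := a) fun i hi => Nat.mul_pos hq (hf i hi).1
  have hf' := (IsSumOfValues.sum_range (a := a) fun i hi => (hf i hi).1).nsmul c
  rw [← sum_neg_distrib, sum_congr rfl hneg, sum_add_distrib, ← smul_sum]
  simpa [add_mul, add_comm] using hqf.add hf'

theorem stmt_18_general (a : ℕ → ℤ) (h1 : a 1 = 1)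
    (hmul : ∀ u v : ℕ, Nat.Coprime u v → a (u * v) = a u * a v)
    (n_f : ℕ) (hnf : 1 < n_f) (C₀ : ℕ) (hC₀ : 0 < C₀) (hanf : a n_f = -(C₀ : ℤ))
    (T : ℤ) (hT : 0 < T) (R m : ℕ)
    (hrep : ∀ Z : ℤ, T ≤ |Z| →
      ∃ n mj : ℕ → ℕ, ∃ r : ℕ, r ≤ R ∧
        (∀ i ∈ Finset.range m, 0 < n i ∧ Nat.Coprime (n i) n_f) ∧
        (∀ j ∈ Finset.range m, 0 < mj j ∧ Nat.Coprime (mj j) n_f) ∧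
        Z = ∑ i ∈ Finset.range m, a (n i) - ∑ j ∈ Finset.range m, a (mj j) + r) :
    ∃ T₁ : ℤ, 0 < T₁ ∧ ∀ Z₁ : ℤ, T₁ ≤ |Z₁| →
      ∃ ℓ ≤ (C₀ + 1) * m + C₀ * R + C₀, ∃ n : ℕ → ℕ,
        (∀ j, 0 < n j) ∧ Z₁ = ∑ j ∈ Finset.range ℓ, a (n j) := by
  refine ⟨T, hT, fun Z hZ => ?_⟩
  obtain ⟨n, mj, r, hr, hn, hmj, rfl⟩ := hrep Z hZ
  have hpos := IsSumOfValues.sum_range (a := a) fun i hi => (hn i hi).1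
  have hneg := isSumOfValues_neg_sum_range hmul (by omega) hC₀ hanf hmj
  have hrem := (IsSumOfValues.apply (a := a) one_pos).nsmul r
  rw [mul_one, h1, nsmul_one] at hrem
  refine ⟨m + C₀ * m + r, ?_, by rw [sub_eq_add_neg]; exact (hpos.add hneg).add hrem⟩
  nlinarith

/-- if every integer of sufficiently large absolute value has a signed
representation `Z = Σ a(n_i) − Σ a(m_j) + r` (`0 ≤ r ≤ R`) with all `n_i, m_j`
coprime to `n_f`, where `a n_f = −C₀ < 0` and `a` is multiplicative on coprime
arguments with `a 1 = 1`, then every integer of sufficiently large absolute value is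
a sum of at most `(C₀+1)·m + C₀·R + C₀` values `a(n)`. -/
theorem stmt_18 (a : ℕ → ℤ) (h1 : a 1 = 1)
    (hmul : ∀ u v : ℕ, Nat.Coprime u v → a (u * v) = a u * a v)
    (n_f : ℕ) (hnf : 1 < n_f) (C₀ : ℕ) (hC₀ : 0 < C₀) (hanf : a n_f = -(C₀ : ℤ))
    (T : ℤ) (hT : 0 < T) (R m : ℕ) (hm : 0 < m)
    (hrep : ∀ Z : ℤ, T ≤ |Z| →
      ∃ n mj : ℕ → ℕ, ∃ r : ℕ, r ≤ R ∧
        (∀ i ∈ Finset.range m, 0 < n i ∧ Nat.Coprime (n i) n_f) ∧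
        (∀ j ∈ Finset.range m, 0 < mj j ∧ Nat.Coprime (mj j) n_f) ∧
        Z = ∑ i ∈ Finset.range m, a (n i) - ∑ j ∈ Finset.range m, a (mj j) + r) :
    ∃ T₁ : ℤ, 0 < T₁ ∧ ∀ Z₁ : ℤ, T₁ ≤ |Z₁| →
      ∃ ℓ ≤ (C₀ + 1) * m + C₀ * R + C₀, ∃ n : ℕ → ℕ,
        (∀ j, 0 < n j) ∧ Z₁ = ∑ j ∈ Finset.range ℓ, a (n j) :=
  stmt_18_general a h1 hmul n_f hnf C₀ hC₀ hanf T hT R m hrep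
end
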